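/- arXiv:2404.09200 — 3 statements merged into one kernel-verified Lean document; each statement's English description precedes it below -/
import Mathlib

section
/- Let E be a real normed vector space, let m ≥ 2 be an integer, let q_0, q_1, …, q_{m-1} ∈ E be the centers of the spheres along a path, and let q_{o,0}, q_{o,1}, …, q_{o,m} ∈ E be intermediate points with q_{o,0} = q_0 and q_{o,m} = q_{m-1}. Define the center-path length L(σ_c) = Σ_{i=1}^{m-1} ‖q_i − q_{i-1}‖ and the intermediate-path length L(σ_o) = Σ_{i=1}^{m} ‖q_{o,i} − q_{o,i-1}‖. If ‖q_i − q_{o,i}‖ ≤ δ for every i = 1, …, m−1, then L(σ_c) − L(σ_o) ≤ 2(m−1)δ. -/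
/-- If each intermediate point `qo i` deviates from the sphere center `q i`
by at most `δ` (for `i = 1,…,m-1`), with `qo 0 = q 0` and `qo m = q (m-1)`, then the
center-path length exceeds the intermediate-path length by at most `2(m-1)δ`. -/
theorem tubeRRT_path_length_gap
    {E : Type*} [NormedAddCommGroup E] [NormedSpace ℝ E]
    (m : ℕ) (hm : 2 ≤ m) (δ : ℝ)
    (q : ℕ → E) (qo : ℕ → E)
    (h0 : qo 0 = q 0) (hmEnd : qo m = q (m - 1))
    (hdev : ∀ i ∈ Finset.Icc 1 (m - 1), ‖q i - qo i‖ ≤ δ) :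
    (∑ i ∈ Finset.Icc 1 (m - 1), ‖q i - q (i - 1)‖) -
      (∑ i ∈ Finset.Icc 1 m, ‖qo i - qo (i - 1)‖) ≤ 2 * (m - 1 : ℕ) * δ := by
  have hδ : 0 ≤ δ := le_trans (norm_nonneg _) (hdev 1 (by
    simp only [Finset.mem_Icc]; omega))
  have hsplit : (∑ i ∈ Finset.Icc 1 m, ‖qo i - qo (i - 1)‖) =
      (∑ i ∈ Finset.Icc 1 (m - 1), ‖qo i - qo (i - 1)‖) + ‖qo m - qo (m - 1)‖ := by
    have h1 : m = (m - 1) + 1 := by omega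
    rw [h1, Finset.sum_Icc_succ_top (by omega)]
    congr 1 <;> rw [← h1]
  rw [hsplit]
  have key : (∑ i ∈ Finset.Icc 1 (m - 1), ‖q i - q (i - 1)‖) -
      (∑ i ∈ Finset.Icc 1 (m - 1), ‖qo i - qo (i - 1)‖) ≤ 2 * (m - 1 : ℕ) * δ := by
    rw [← Finset.sum_sub_distrib]
    calc ∑ i ∈ Finset.Icc 1 (m - 1), (‖q i - q (i - 1)‖ - ‖qo i - qo (i - 1)‖)
        ≤ ∑ i ∈ Finset.Icc 1 (m - 1), (2 * δ) := by
          apply Finset.sum_le_sum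
          intro i hi
          simp only [Finset.mem_Icc] at hi
          have htri : ‖q i - q (i - 1)‖ ≤
              ‖q i - qo i‖ + ‖qo i - qo (i - 1)‖ + ‖q (i - 1) - qo (i - 1)‖ := by
            have : q i - q (i - 1) =
                (q i - qo i) + (qo i - qo (i - 1)) + (qo (i - 1) - q (i - 1)) := by
              abel
            rw [this]
            calc ‖(q i - qo i) + (qo i - qo (i - 1)) + (qo (i - 1) - q (i - 1))‖
                ≤ ‖(q i - qo i) + (qo i - qo (i - 1))‖ + ‖qo (i - 1) - q (i - 1)‖ :=
                  norm_add_le _ _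
              _ ≤ ‖q i - qo i‖ + ‖qo i - qo (i - 1)‖ + ‖qo (i - 1) - q (i - 1)‖ := by
                  gcongr; exact norm_add_le _ _
              _ = ‖q i - qo i‖ + ‖qo i - qo (i - 1)‖ + ‖q (i - 1) - qo (i - 1)‖ := by
                  rw [norm_sub_rev (qo (i - 1)) (q (i - 1))]
          have hd1 : ‖q i - qo i‖ ≤ δ := hdev i (by simp only [Finset.mem_Icc]; omega)
          have hd2 : ‖q (i - 1) - qo (i - 1)‖ ≤ δ := by
            rcases Nat.eq_or_lt_of_le hi.1 with h | h
            · rw [← h]; simp [h0]; exact hδ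
            · exact hdev (i - 1) (by simp only [Finset.mem_Icc]; omega)
          linarith
      _ = 2 * (m - 1 : ℕ) * δ := by
          rw [Finset.sum_const, Nat.card_Icc]
          push_cast
          ring_nf
  have hnn : 0 ≤ ‖qo m - qo (m - 1)‖ := norm_nonneg _
  linarith
end

section
/- Let E be a real normed vector space, let ε > 0, let m ≥ 2 be an integer, let q_0, q_1, …, q_{m-1} ∈ E and q_{o,0}, q_{o,1}, …, q_{o,m} ∈ E satisfy q_{o,0} = q_0 and q_{o,m} = q_{m-1}. Define L(σ_c) = Σ_{i=1}^{m-1} ‖q_i − q_{i-1}‖ and L(σ_o) = Σ_{i=1}^{m} ‖q_{o,i} − q_{o,i-1}‖. If max_{1 ≤ i ≤ m−1} ‖q_i − q_{o,i}‖ ≤ ε/(2m), then L(σ_c) − L(σ_o) ≤ ε. -/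
/-- paper's Lemma 1: if the maximal deviation between the sphere centers
`q i` and the intermediate points `qo i` (for `i = 1,…,m-1`) is at most `ε/(2m)`, then
the center-path length exceeds the intermediate-path length by at most `ε`. -/
theorem tubeRRT_path_length_approx
    {E : Type*} [NormedAddCommGroup E] [NormedSpace ℝ E]
    (ε : ℝ) (hε : 0 < ε) (m : ℕ) (hm : 2 ≤ m)
    (q : ℕ → E) (qo : ℕ → E)
    (h0 : qo 0 = q 0) (hmEnd : qo m = q (m - 1))
    (hdev : ∀ i ∈ Finset.Icc 1 (m - 1), ‖q i - qo i‖ ≤ ε / (2 * m)) :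
    (∑ i ∈ Finset.Icc 1 (m - 1), ‖q i - q (i - 1)‖) -
      (∑ i ∈ Finset.Icc 1 m, ‖qo i - qo (i - 1)‖) ≤ ε := by
  have hm0 : (0:ℝ) < (m:ℝ) := by
    have : 0 < m := by omega
    exact_mod_cast this
  set B := ε / (2 * m) with hBdef
  have hB : 0 ≤ B := by positivity
  have hd : ∀ i ∈ Finset.Icc 1 (m-1), ‖q i - q (i-1)‖ ≤ ‖qo i - qo (i-1)‖ + 2*B := by
    intro i hi
    rw [Finset.mem_Icc] at hi
    have h1 : ‖q i - qo i‖ ≤ B := hdev i (Finset.mem_Icc.2 hi)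
    have h2 : ‖q (i-1) - qo (i-1)‖ ≤ B := by
      rcases Nat.eq_or_lt_of_le hi.1 with h | h
      · have : i - 1 = 0 := by omega
        rw [this, h0, sub_self, norm_zero]
        exact hB
      · exact hdev (i-1) (Finset.mem_Icc.2 ⟨by omega, by omega⟩)
    have key : q i - q (i-1) = (q i - qo i) + (qo i - qo (i-1)) + (qo (i-1) - q (i-1)) := by
      abel
    calc ‖q i - q (i-1)‖
        ≤ ‖q i - qo i‖ + ‖qo i - qo (i-1)‖ + ‖qo (i-1) - q (i-1)‖ := by
          rw [key]; exact norm_add₃_le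
      _ = ‖qo i - qo (i-1)‖ + (‖q i - qo i‖ + ‖q (i-1) - qo (i-1)‖) := by
          rw [norm_sub_rev (qo (i-1))]; ring
      _ ≤ ‖qo i - qo (i-1)‖ + (B + B) := by
          have := add_le_add h1 h2
          linarith
      _ = ‖qo i - qo (i-1)‖ + 2*B := by ring
  have hsum : (∑ i ∈ Finset.Icc 1 (m - 1), ‖q i - q (i - 1)‖)
      ≤ (∑ i ∈ Finset.Icc 1 (m-1), ‖qo i - qo (i-1)‖) + ((m-1 : ℕ) : ℝ) * (2*B) := by
    calc (∑ i ∈ Finset.Icc 1 (m - 1), ‖q i - q (i - 1)‖)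
        ≤ ∑ i ∈ Finset.Icc 1 (m-1), (‖qo i - qo (i-1)‖ + 2*B) := Finset.sum_le_sum hd
      _ = (∑ i ∈ Finset.Icc 1 (m-1), ‖qo i - qo (i-1)‖) + ((m-1 : ℕ) : ℝ) * (2*B) := by
          rw [Finset.sum_add_distrib, Finset.sum_const, Nat.card_Icc, nsmul_eq_mul]
          norm_num
  have hsub : (∑ i ∈ Finset.Icc 1 (m-1), ‖qo i - qo (i-1)‖)
      ≤ ∑ i ∈ Finset.Icc 1 m, ‖qo i - qo (i-1)‖ :=
    Finset.sum_le_sum_of_subset_of_nonneg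
      (Finset.Icc_subset_Icc_right (Nat.sub_le m 1))
      (fun i _ _ => norm_nonneg _)
  have hcount : ((m-1 : ℕ) : ℝ) * (2*B) ≤ ε := by
    have h1 : ((m-1 : ℕ) : ℝ) ≤ (m : ℝ) := by
      exact_mod_cast Nat.sub_le m 1
    have h2 : (m : ℝ) * (2*B) = ε := by
      rw [hBdef]; field_simp
    nlinarith
  linarith
end

section
/- Let E be a real normed vector space, let m ≥ 2 be an integer, let q_0, q_1, …, q_{m-1} ∈ E, and let q_{o,0}, q_{o,1}, …, q_{o,m} ∈ E satisfy q_{o,0} = q_0, q_{o,m} = q_{m-1}, and for each i = 1, …, m−1 the point q_{o,i} lies on the closed segment joining q_{i-1} and q_i. Then Σ_{i=1}^{m} ‖q_{o,i} − q_{o,i-1}‖ ≤ Σ_{i=1}^{m-1} ‖q_i − q_{i-1}‖, i.e., the path through the intersection centers is no longer than the path through the sphere centers. -/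
/-- if each intermediate point `qo i` lies on the closed segment joining
`q (i-1)` and `q i` (for `i = 1,…,m-1`), with `qo 0 = q 0` and `qo m = q (m-1)`, then
the path through the intersection centers is no longer than the path through the sphere
centers. -/
theorem tubeRRT_intersection_path_shorter
    {E : Type*} [NormedAddCommGroup E] [NormedSpace ℝ E]
    (m : ℕ) (hm : 2 ≤ m)
    (q : ℕ → E) (qo : ℕ → E)
    (h0 : qo 0 = q 0) (hmEnd : qo m = q (m - 1))
    (hseg : ∀ i ∈ Finset.Icc 1 (m - 1), qo i ∈ segment ℝ (q (i - 1)) (q i)) :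
    (∑ i ∈ Finset.Icc 1 m, ‖qo i - qo (i - 1)‖) ≤
      ∑ i ∈ Finset.Icc 1 (m - 1), ‖q i - q (i - 1)‖ := by
  obtain ⟨n, rfl⟩ : ∃ n, m = n + 2 := ⟨m - 2, by omega⟩
  have hseg' : ∀ i ≤ n, qo (i + 1) ∈ segment ℝ (q i) (q (i + 1)) := by
    intro i hi
    have := hseg (i + 1) (by simp [Finset.mem_Icc]; omega)
    simpa using this
  have key : ∀ i ≤ n, ‖q (i + 1) - q i‖ =
      ‖qo (i + 1) - q i‖ + ‖q (i + 1) - qo (i + 1)‖ := by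
    intro i hi
    have := dist_add_dist_of_mem_segment (hseg' i hi)
    rw [dist_eq_norm, dist_eq_norm, dist_eq_norm] at this
    have h1 := norm_sub_rev (q i) (qo (i + 1))
    have h2 := norm_sub_rev (qo (i + 1)) (q (i + 1))
    have h3 := norm_sub_rev (q i) (q (i + 1))
    linarith
  have hend : qo (n + 2) = q (n + 1) := by simpa using hmEnd
  -- convert Icc sums to range sums
  have hL : (∑ i ∈ Finset.Icc 1 (n + 2), ‖qo i - qo (i - 1)‖) =
      ∑ i ∈ Finset.range (n + 2), ‖qo (i + 1) - qo i‖ := by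
    rw [show Finset.Icc 1 (n + 2) = Finset.Ico 1 (n + 3) by rfl, Finset.sum_Ico_eq_sum_range]
    simp [add_comm 1]
  have hR : (∑ i ∈ Finset.Icc 1 (n + 2 - 1), ‖q i - q (i - 1)‖) =
      ∑ i ∈ Finset.range (n + 1), ‖q (i + 1) - q i‖ := by
    rw [show Finset.Icc 1 (n + 2 - 1) = Finset.Ico 1 (n + 2) by rfl, Finset.sum_Ico_eq_sum_range]
    simp [add_comm 1]
  rw [hL, hR]
  have hR' : (∑ i ∈ Finset.range (n + 1), ‖q (i + 1) - q i‖) =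
      (∑ i ∈ Finset.range n,
          (‖qo (i + 1 + 1) - q (i + 1)‖ + ‖q (i + 1) - qo (i + 1)‖))
        + ‖qo (0 + 1) - q 0‖ + ‖q (n + 1) - qo (n + 1)‖ := by
    rw [Finset.sum_congr rfl (fun i hi => key i (by
      have := Finset.mem_range.mp hi; omega))]
    rw [Finset.sum_add_distrib,
      Finset.sum_range_succ' (fun i => ‖qo (i + 1) - q i‖),
      Finset.sum_range_succ (fun i => ‖q (i + 1) - qo (i + 1)‖),
      Finset.sum_add_distrib]
    ring
  rw [hR', Finset.sum_range_succ, Finset.sum_range_succ']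
  have e0 : ‖qo (0 + 1) - qo 0‖ = ‖qo (0 + 1) - q 0‖ := by rw [h0]
  have eEnd : ‖qo (n + 1 + 1) - qo (n + 1)‖ = ‖q (n + 1) - qo (n + 1)‖ := by
    rw [show n + 1 + 1 = n + 2 from rfl, hend]
  rw [e0, eEnd]
  gcongr with i hi
  · calc ‖qo (i + 1 + 1) - qo (i + 1)‖
        ≤ ‖qo (i + 1 + 1) - q (i + 1)‖ + ‖q (i + 1) - qo (i + 1)‖ := by
          simpa [sub_add_sub_cancel] using
            norm_add_le (qo (i + 1 + 1) - q (i + 1)) (q (i + 1) - qo (i + 1))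
end
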